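/- Shepherdson's system Sh is sound and complete with respect to all set-theoretic models allowing empty denotations: a formula is a thesis of Sh if and only if it is true in every model (U, D) where U is an arbitrary set and D assigns arbitrary subsets of U to name letters. -/

import Mathlib

inductive LForm : Type
  | atomA : Nat → Nat → LForm
  | atomI : Nat → Nat → LForm
  | atomE : Nat → Nat → LForm
  | atomO : Nat → Nat → LForm
  | neg : LForm → LForm
  | conj : LForm → LForm → LForm
  | disj : LForm → LForm → LForm
  | impl : LForm → LForm → LForm
  | equiv : LForm → LForm → LForm

namespace LForm

/-- Boolean evaluation of a formula given a Boolean valuation of the atoms. -/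
def beval (vA vI vE vO : Nat → Nat → Bool) : LForm → Bool
  | atomA s p => vA s p
  | atomI s p => vI s p
  | atomE s p => vE s p
  | atomO s p => vO s p
  | neg φ => !(beval vA vI vE vO φ)
  | conj φ ψ => beval vA vI vE vO φ && beval vA vI vE vO ψ
  | disj φ ψ => beval vA vI vE vO φ || beval vA vI vE vO ψ
  | impl φ ψ => !(beval vA vI vE vO φ) || beval vA vI vE vO ψ
  | equiv φ ψ => beval vA vI vE vO φ == beval vA vI vE vO ψ

/-- Substitution instances of classical propositional tautologies. -/
def Taut (φ : LForm) : Prop := ∀ vA vI vE vO, beval vA vI vE vO φ = true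

/-- Uniform substitution of name letters. -/
def rename (σ : Nat → Nat) : LForm → LForm
  | atomA s p => atomA (σ s) (σ p)
  | atomI s p => atomI (σ s) (σ p)
  | atomE s p => atomE (σ s) (σ p)
  | atomO s p => atomO (σ s) (σ p)
  | neg φ => neg (rename σ φ)
  | conj φ ψ => conj (rename σ φ) (rename σ ψ)
  | disj φ ψ => disj (rename σ φ) (rename σ ψ)
  | impl φ ψ => impl (rename σ φ) (rename σ ψ)
  | equiv φ ψ => equiv (rename σ φ) (rename σ ψ)

/-- Set-theoretic interpretation in a model given by a denotation function. -/
def eval {α : Type} (D : Nat → Set α) : LForm → Prop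
  | atomA s p => D s ⊆ D p
  | atomI s p => (D s ∩ D p).Nonempty
  | atomE s p => ¬ (D s ∩ D p).Nonempty
  | atomO s p => ¬ D s ⊆ D p
  | neg φ => ¬ eval D φ
  | conj φ ψ => eval D φ ∧ eval D ψ
  | disj φ ψ => eval D φ ∨ eval D ψ
  | impl φ ψ => eval D φ → eval D ψ
  | equiv φ ψ => eval D φ ↔ eval D ψ

/-- Derivability from a set of specific axioms, over classical propositional
logic, with modus ponens and uniform substitution. -/
inductive Deriv (Ax : LForm → Prop) : LForm → Prop
  | ax {φ} : Ax φ → Deriv Ax φ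
  | taut {φ} : Taut φ → Deriv Ax φ
  | mp {φ ψ} : Deriv Ax (impl φ ψ) → Deriv Ax φ → Deriv Ax ψ
  | subst {φ} (σ : Nat → Nat) : Deriv Ax φ → Deriv Ax (rename σ φ)

/-- The specific axioms of Łukasiewicz's calculus. -/
def LukAx : LForm → Prop := fun φ =>
  (∃ S, φ = atomA S S) ∨
  (∃ S, φ = atomI S S) ∨
  (∃ M P S, φ = impl (conj (atomA M P) (atomA S M)) (atomA S P)) ∨
  (∃ M P S, φ = impl (conj (atomA M P) (atomI M S)) (atomI S P)) ∨
  (∃ S P, φ = equiv (atomE S P) (neg (atomI S P))) ∨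
  (∃ S P, φ = equiv (atomO S P) (neg (atomA S P)))

/-- The specific axioms of Shepherdson's system Sh. -/
def ShAx : LForm → Prop := fun φ =>
  (∃ S, φ = atomA S S) ∨
  (∃ M P S, φ = impl (conj (atomA M P) (atomA S M)) (atomA S P)) ∨
  (∃ M P S, φ = impl (conj (atomA M P) (atomI M S)) (atomI S P)) ∨
  (∃ S P, φ = impl (atomI S P) (atomI S S)) ∨
  (∃ S P, φ = impl (neg (atomI S S)) (atomA S P)) ∨
  (∃ S P, φ = equiv (atomE S P) (neg (atomI S P))) ∨
  (∃ S P, φ = equiv (atomO S P) (neg (atomA S P)))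

end LForm

open LForm

/-!
Soundness is an induction on derivations. For completeness, a valid `φ` is a tautological
consequence of the finitely many instances of the Sh axioms in its own letters: a Boolean
valuation making all those instances true is realised by a model in which each true `S i P`
gets a witness point, and `φ` holds in that model. Modus ponens against the axiom instances
then yields `φ`.
-/

namespace LForm

def letters : LForm → List Nat
  | atomA s p | atomI s p | atomE s p | atomO s p => [s, p]
  | neg φ => letters φ
  | conj φ ψ | disj φ ψ | impl φ ψ | equiv φ ψ => letters φ ++ letters ψ

def Agrees {α : Type} (D : Nat → Set α) (vA vI vE vO : Nat → Nat → Bool) (L : List Nat) :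
    Prop :=
  ∀ s ∈ L, ∀ p ∈ L, (vA s p = true ↔ D s ⊆ D p) ∧ (vI s p = true ↔ (D s ∩ D p).Nonempty) ∧
    (vE s p = true ↔ ¬ (D s ∩ D p).Nonempty) ∧ (vO s p = true ↔ ¬ D s ⊆ D p)

theorem eval_iff_beval {α : Type} {D : Nat → Set α} {vA vI vE vO : Nat → Nat → Bool}
    {L : List Nat} (hv : Agrees D vA vI vE vO L) {ψ : LForm} (hψ : letters ψ ⊆ L) :
    eval D ψ ↔ beval vA vI vE vO ψ = true := by
  induction ψ with
  | atomA s p => exact (hv s (hψ (by simp [letters])) p (hψ (by simp [letters]))).1.symm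
  | atomI s p => exact (hv s (hψ (by simp [letters])) p (hψ (by simp [letters]))).2.1.symm
  | atomE s p => exact (hv s (hψ (by simp [letters])) p (hψ (by simp [letters]))).2.2.1.symm
  | atomO s p => exact (hv s (hψ (by simp [letters])) p (hψ (by simp [letters]))).2.2.2.symm
  | neg φ ih => simp [eval, beval, ih hψ]
  | conj φ ψ ihφ ihψ | disj φ ψ ihφ ihψ | impl φ ψ ihφ ihψ | equiv φ ψ ihφ ihψ =>
    rw [letters, List.append_subset] at hψ
    simp [eval, beval, ihφ hψ.1, ihψ hψ.2, imp_iff_not_or]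

open Classical in
theorem agrees_decide {α : Type} (D : Nat → Set α) (L : List Nat) :
    Agrees D (fun s p => decide (D s ⊆ D p)) (fun s p => decide (D s ∩ D p).Nonempty)
      (fun s p => decide ¬ (D s ∩ D p).Nonempty) (fun s p => decide ¬ D s ⊆ D p) L := by
  intro s _ p _
  simp only [decide_eq_true_iff, and_self]

theorem eval_of_taut {φ : LForm} (h : Taut φ) {α : Type} (D : Nat → Set α) : eval D φ :=
  (eval_iff_beval (agrees_decide D (letters φ)) (List.Subset.refl _)).2 (h _ _ _ _)

theorem eval_rename {α : Type} (D : Nat → Set α) (σ : Nat → Nat) (ψ : LForm) :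
    eval D (rename σ ψ) ↔ eval (D ∘ σ) ψ := by
  induction ψ <;> simp_all [rename, eval]

theorem eval_of_shAx {φ : LForm} (h : ShAx φ) {α : Type} (D : Nat → Set α) : eval D φ := by
  rcases h with ⟨S, rfl⟩ | ⟨M, P, S, rfl⟩ | ⟨M, P, S, rfl⟩ | ⟨S, P, rfl⟩ | ⟨S, P, rfl⟩ |
    ⟨S, P, rfl⟩ | ⟨S, P, rfl⟩
  · exact subset_rfl
  · exact fun ⟨hMP, hSM⟩ => hSM.trans hMP
  · exact fun ⟨hMP, x, hxM, hxS⟩ => ⟨x, hxS, hMP hxM⟩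
  · exact fun ⟨x, hxS, _⟩ => ⟨x, hxS, hxS⟩
  · exact fun hS x hx => absurd ⟨x, hx, hx⟩ hS
  · exact Iff.rfl
  · exact Iff.rfl

theorem eval_of_deriv {Ax : LForm → Prop}
    (hAx : ∀ ψ, Ax ψ → ∀ {α : Type} (D : Nat → Set α), eval D ψ) {φ : LForm} (h : Deriv Ax φ)
    {α : Type} (D : Nat → Set α) : eval D φ := by
  induction h generalizing α with
  | ax h => exact hAx _ h D
  | taut h => exact eval_of_taut h D
  | mp _ _ ihImp ih => exact ihImp D (ih D)
  | subst σ _ ih => exact (eval_rename D σ _).2 (ih (D ∘ σ))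

structure IsShValuation (L : Set Nat) (a i : Nat → Nat → Bool) : Prop where
  refl : ∀ s ∈ L, a s s = true
  barbara : ∀ m ∈ L, ∀ p ∈ L, ∀ s ∈ L, a m p = true → a s m = true → a s p = true
  datisi : ∀ m ∈ L, ∀ p ∈ L, ∀ s ∈ L, a m p = true → i m s = true → i s p = true
  star : ∀ s ∈ L, ∀ p ∈ L, i s p = true → i s s = true
  starStar : ∀ s ∈ L, ∀ p ∈ L, i s s = false → a s p = true

namespace IsShValuation

variable {L : Set Nat} {a i : Nat → Nat → Bool}

theorem i_symm (h : IsShValuation L a i) {s p : Nat} (hs : s ∈ L) (hp : p ∈ L)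
    (hsp : i s p = true) : i p s = true :=
  h.datisi s hs s hs p hp (h.refl s hs) hsp

theorem i_mono (h : IsShValuation L a i) {x y u v : Nat} (hx : x ∈ L) (hy : y ∈ L)
    (hu : u ∈ L) (hv : v ∈ L) (hxy : i x y = true) (hxu : a x u = true) (hyv : a y v = true) :
    i u v = true :=
  h.i_symm hv hu <| h.datisi x hx u hu v hv hxu <| h.datisi y hy v hv x hx hyv <|
    h.i_symm hx hy hxy

/-- The canonical model: one point for every true `i`-atom `x i y` over `L`, lying in the
denotation of every letter that `x` or `y` is `a`-below. -/
theorem exists_model (h : IsShValuation L a i) :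
    ∃ D : Nat → Set {q : Nat × Nat // q.1 ∈ L ∧ q.2 ∈ L ∧ i q.1 q.2 = true},
      ∀ s ∈ L, ∀ p ∈ L, (D s ⊆ D p ↔ a s p = true) ∧ ((D s ∩ D p).Nonempty ↔ i s p = true) := by
  refine ⟨fun x => {q | a q.1.1 x = true ∨ a q.1.2 x = true}, fun s hs p hp => ⟨⟨?_, ?_⟩, ?_, ?_⟩⟩
  · intro hsub
    cases hss : i s s with
    | false => exact h.starStar s hs p hp hss
    | true => exact (hsub (a := ⟨(s, s), hs, hs, hss⟩) (Or.inl (h.refl s hs))).elim id id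
  · rintro hsp q (hq | hq)
    · exact Or.inl (h.barbara s hs p hp _ q.2.1 hsp hq)
    · exact Or.inr (h.barbara s hs p hp _ q.2.2.1 hsp hq)
  · rintro ⟨⟨⟨x, y⟩, hx, hy, hxy⟩, hxs | hys, hxp | hyp⟩
    · exact h.i_mono hx hx hs hp (h.star x hx y hy hxy) hxs hxp
    · exact h.i_mono hx hy hs hp hxy hxs hyp
    · exact h.i_mono hy hx hs hp (h.i_symm hx hy hxy) hys hxp
    · exact h.i_mono hy hy hs hp (h.star y hy x hx (h.i_symm hx hy hxy)) hys hyp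
  · intro hsp
    exact ⟨⟨(s, p), hs, hp, hsp⟩, Or.inl (h.refl s hs), Or.inr (h.refl p hp)⟩

end IsShValuation

def shInstancesAt (m p s : Nat) : List LForm :=
  [atomA s s,
   impl (conj (atomA m p) (atomA s m)) (atomA s p),
   impl (conj (atomA m p) (atomI m s)) (atomI s p),
   impl (atomI s p) (atomI s s),
   impl (neg (atomI s s)) (atomA s p),
   equiv (atomE s p) (neg (atomI s p)),
   equiv (atomO s p) (neg (atomA s p))]

def shInstances (L : List Nat) : List LForm :=
  L.flatMap fun m => L.flatMap fun p => L.flatMap fun s => shInstancesAt m p s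

theorem shInstancesAt_subset {L : List Nat} {m p s : Nat} (hm : m ∈ L) (hp : p ∈ L)
    (hs : s ∈ L) : shInstancesAt m p s ⊆ shInstances L := fun _ hχ =>
  List.mem_flatMap.2 ⟨m, hm, List.mem_flatMap.2 ⟨p, hp, List.mem_flatMap.2 ⟨s, hs, hχ⟩⟩⟩

theorem shAx_of_mem_shInstances {L : List Nat} {χ : LForm} (h : χ ∈ shInstances L) :
    ShAx χ := by
  simp only [shInstances, List.mem_flatMap] at h
  obtain ⟨m, -, p, -, s, -, h⟩ := h
  simp only [shInstancesAt, List.mem_cons, List.not_mem_nil, or_false] at h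
  unfold ShAx
  rcases h with rfl | rfl | rfl | rfl | rfl | rfl | rfl
  · exact Or.inl ⟨s, rfl⟩
  · exact Or.inr <| Or.inl ⟨m, p, s, rfl⟩
  · exact Or.inr <| Or.inr <| Or.inl ⟨m, p, s, rfl⟩
  · exact Or.inr <| Or.inr <| Or.inr <| Or.inl ⟨s, p, rfl⟩
  · exact Or.inr <| Or.inr <| Or.inr <| Or.inr <| Or.inl ⟨s, p, rfl⟩
  · exact Or.inr <| Or.inr <| Or.inr <| Or.inr <| Or.inr <| Or.inl ⟨s, p, rfl⟩
  · exact Or.inr <| Or.inr <| Or.inr <| Or.inr <| Or.inr <| Or.inr ⟨s, p, rfl⟩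

section BooleanValuation

variable {vA vI vE vO : Nat → Nat → Bool} {L : List Nat}
  (h : ∀ χ ∈ shInstances L, beval vA vI vE vO χ = true)
include h

theorem beval_shInstancesAt {m p s : Nat} (hm : m ∈ L) (hp : p ∈ L) (hs : s ∈ L) :
    vA s s = true ∧ (vA m p = true → vA s m = true → vA s p = true) ∧
      (vA m p = true → vI m s = true → vI s p = true) ∧ (vI s p = true → vI s s = true) ∧
      (vI s s = false → vA s p = true) ∧ vE s p = !vI s p ∧ vO s p = !vA s p := by
  have hAt := fun χ hχ => h χ (shInstancesAt_subset hm hp hs hχ)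
  simp only [shInstancesAt, List.forall_mem_cons, beval,
    Bool.or_eq_true, Bool.not_eq_true', Bool.and_eq_false_iff, beq_iff_eq] at hAt
  obtain ⟨hrefl, hbarbara, hdatisi, hstar, hstarStar, hE, hO, -⟩ := hAt
  refine ⟨hrefl, ?_, ?_, ?_, ?_, hE, hO⟩ <;> intros <;> simp_all

theorem isShValuation_of_beval_shInstances : IsShValuation {n | n ∈ L} vA vI where
  refl _ hs := (beval_shInstancesAt h hs hs hs).1
  barbara _ hm _ hp _ hs := (beval_shInstancesAt h hm hp hs).2.1
  datisi _ hm _ hp _ hs := (beval_shInstancesAt h hm hp hs).2.2.1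
  star _ hs _ hp := (beval_shInstancesAt h hs hp hs).2.2.2.1
  starStar _ hs _ hp := (beval_shInstancesAt h hs hp hs).2.2.2.2.1

end BooleanValuation

def impChain (l : List LForm) (φ : LForm) : LForm := l.foldr impl φ

theorem beval_impChain {vA vI vE vO : Nat → Nat → Bool} (l : List LForm) (φ : LForm) :
    beval vA vI vE vO (impChain l φ) = true ↔
      ((∀ χ ∈ l, beval vA vI vE vO χ = true) → beval vA vI vE vO φ = true) := by
  induction l with
  | nil => simp [impChain]
  | cons χ l ih =>
    rw [impChain, List.foldr_cons, ← impChain]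
    simp [beval, ih, imp_iff_not_or, or_assoc]

theorem deriv_of_deriv_impChain {Ax : LForm → Prop} {l : List LForm} {φ : LForm}
    (himp : Deriv Ax (impChain l φ)) (hl : ∀ χ ∈ l, Deriv Ax χ) : Deriv Ax φ := by
  induction l with
  | nil => exact himp
  | cons χ l ih =>
    exact ih (.mp himp (hl χ List.mem_cons_self)) fun ψ hψ => hl ψ (List.mem_cons_of_mem _ hψ)

theorem taut_impChain_shInstances {φ : LForm} (hφ : ∀ (U : Type) (D : Nat → Set U), eval D φ) :
    Taut (impChain (shInstances (letters φ)) φ) := by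
  intro vA vI vE vO
  rw [beval_impChain]
  intro hinst
  obtain ⟨D, hD⟩ := (isShValuation_of_beval_shInstances hinst).exists_model
  have hv : Agrees D vA vI vE vO (letters φ) := by
    intro s hs p hp
    obtain ⟨-, -, -, -, -, hE, hO⟩ := beval_shInstancesAt hinst hs hp hs
    simp [hE, hO, (hD s hs p hp).1, (hD s hs p hp).2]
  exact (eval_iff_beval hv (List.Subset.refl _)).1 (hφ _ D)

theorem deriv_of_valid {φ : LForm} (hφ : ∀ (U : Type) (D : Nat → Set U), eval D φ) :
    Deriv ShAx φ :=
  deriv_of_deriv_impChain (.taut (taut_impChain_shInstances hφ)) fun _ hχ =>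
    .ax (shAx_of_mem_shInstances hχ)

end LForm

/-- Shepherdson's system Sh is sound and complete with respect to all models
allowing empty denotations: a formula is a thesis of Sh iff it is true in
every model `(U, D)` with `U` an arbitrary set and `D` assigning arbitrary
subsets of `U`. -/
theorem shepherdson_sound_complete (φ : LForm) :
    Deriv ShAx φ ↔ ∀ (U : Type) (D : Nat → Set U), eval D φ :=
  ⟨fun h _ D => eval_of_deriv (fun _ => eval_of_shAx) h D, deriv_of_valid⟩
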